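/- Let R be a covering trace for S that contains no boxes, and let A be a shortest-path tree in R from the root (1,1) to all the points (βx, βy) with (x,y) ∈ S. Then A, translated by (−1,−1), is a rectilinear Steiner arborescence for the translated scaled sink set {(βx−1, βy−1) : (x,y) ∈ S}; in particular, this set has a rectilinear Steiner arborescence of length at most cost(R)/2. -/

import Mathlib

open Set

noncomputable section

/-- A point in the plane. -/
abbrev Pt := ℝ × ℝ

/-! ### Rectilinear trees and rectilinear Steiner arborescences -/

/-- An axis-parallel (horizontal or vertical) closed line segment in the plane. -/
structure Seg where
  p : Pt
  q : Pt
  ne : p ≠ q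
  axis : p.1 = q.1 ∨ p.2 = q.2

noncomputable instance : DecidableEq Seg := Classical.decEq _

namespace Seg

/-- The set of points of a segment. -/
def set (s : Seg) : Set Pt := segment ℝ s.p s.q

/-- The length of an axis-parallel segment. -/
def length (s : Seg) : ℝ := |s.q.1 - s.p.1| + |s.q.2 - s.p.2|

/-- The two endpoints of a segment. -/
def endpoints (s : Seg) : Set Pt := {s.p, s.q}

/-- Translating a segment by a vector. -/
def translate (v : Pt) (s : Seg) : Seg where
  p := s.p + v
  q := s.q + v
  ne := fun h => s.ne (by
    have := congrArg (fun w => w - v) h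
    simpa using this)
  axis := by
    rcases s.axis with h | h
    · left; simpa using h
    · right; simpa using h

end Seg

/-- A monotone (north/east going) path from `a` to `b` inside the set `A`. -/
def MonoPathIn (A : Set Pt) (a b : Pt) : Prop :=
  ∃ f : ℝ → Pt, ContinuousOn f (Set.Icc 0 1) ∧ f 0 = a ∧ f 1 = b ∧
    (∀ t ∈ Set.Icc (0:ℝ) 1, f t ∈ A) ∧
    MonotoneOn (fun t => (f t).1) (Set.Icc (0:ℝ) 1) ∧
    MonotoneOn (fun t => (f t).2) (Set.Icc (0:ℝ) 1)

/-- A rectilinear tree: a connected, acyclic (simply connected) collection of horizontal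
and vertical segments that intersect only at their endpoints. -/
structure RectTree where
  segs : Finset Seg
  inter : ∀ s ∈ segs, ∀ t ∈ segs, s ≠ t →
    Seg.set s ∩ Seg.set t ⊆ Seg.endpoints s ∩ Seg.endpoints t
  conn : IsConnected (⋃ s ∈ segs, Seg.set s)
  acyclic : SimplyConnectedSpace ↥(⋃ s ∈ segs, Seg.set s)

namespace RectTree

/-- The union of all segments of a rectilinear tree. -/
def carrier (T : RectTree) : Set Pt := ⋃ s ∈ T.segs, Seg.set s

/-- The total length of a rectilinear tree. -/
def length (T : RectTree) : ℝ := ∑ s ∈ T.segs, Seg.length s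

/-- A leaf of a rectilinear tree: a point that is an endpoint of exactly one segment
and lies on no other segment. -/
def IsLeaf (T : RectTree) (v : Pt) : Prop :=
  (∃! s, s ∈ T.segs ∧ v ∈ Seg.endpoints s) ∧
  ∀ s ∈ T.segs, v ∈ Seg.set s → v ∈ Seg.endpoints s

end RectTree

/-- `T` is a rectilinear Steiner arborescence with root `root` for the set `S` of sinks:
`T` is rooted at `root`, each leaf of `T` lies at a sink, and each sink is connected to the
root by a monotone (north/east) path in `T` (equivalently, the path in the tree from the
root to the sink `(x,y)` has length exactly `|x - root.x| + |y - root.y|`). -/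
def IsRSA (T : RectTree) (root : Pt) (S : Set Pt) : Prop :=
  root ∈ T.carrier ∧
  (∀ v : Pt, T.IsLeaf v → v ≠ root → v ∈ S) ∧
  ∀ s ∈ S, MonoPathIn T.carrier root s

/-- The Hanan grid of a planar point set: the union of all horizontal and vertical
lines through the points of the set. -/
def hananGrid (P : Set Pt) : Set Pt := {q | ∃ p ∈ P, q.1 = p.1 ∨ q.2 = p.2}

/-- The planar point with the given nonnegative integer coordinates. -/
def toPt (p : ℕ × ℕ) : Pt := ((p.1 : ℝ), (p.2 : ℝ))
/-! ### Simple polygons, triangulations and flips -/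

/-- The cyclic successor of an index. -/
def nextIdx {n : ℕ} (i : Fin n) : Fin n := ⟨((i : ℕ) + 1) % n, Nat.mod_lt _ i.pos⟩

/-- A simple polygon, given by the cyclic sequence of its vertices; the boundary edges
intersect only at shared endpoints. -/
structure SimplePolygon (n : ℕ) where
  hn : 3 ≤ n
  V : Fin n → Pt
  inj : Function.Injective V
  simple : ∀ i j : Fin n, i ≠ j →
    segment ℝ (V i) (V (nextIdx i)) ∩ segment ℝ (V j) (V (nextIdx j)) ⊆
      ({V i, V (nextIdx i)} ∩ {V j, V (nextIdx j)} : Set Pt)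

/-- The boundary of a simple polygon: the union of its edges. -/
def polyBoundary {n : ℕ} (P : SimplePolygon n) : Set Pt :=
  ⋃ i : Fin n, segment ℝ (P.V i) (P.V (nextIdx i))

/-- The interior of a simple polygon: the union of the bounded connected components of the
complement of its boundary. -/
def polyInterior {n : ℕ} (P : SimplePolygon n) : Set Pt :=
  {x | x ∉ polyBoundary P ∧ Bornology.IsBounded (connectedComponentIn (polyBoundary P)ᶜ x)}

/-- The closed region bounded by a simple polygon. -/
def polyRegion {n : ℕ} (P : SimplePolygon n) : Set Pt := polyBoundary P ∪ polyInterior P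

/-- `(i, j)` spans a diagonal of the polygon `P`: the two vertices are distinct and
non-adjacent, and the open segment between them lies in the interior of `P`. -/
def IsDiag {n : ℕ} (P : SimplePolygon n) (i j : Fin n) : Prop :=
  i ≠ j ∧ j ≠ nextIdx i ∧ i ≠ nextIdx j ∧
  openSegment ℝ (P.V i) (P.V j) ⊆ polyInterior P

/-- A triangulation of a simple polygon: a maximal set of pairwise non-crossing diagonals.
Diagonals are recorded as ordered pairs `(i, j)` with `i < j`. -/
structure Triangulation {n : ℕ} (P : SimplePolygon n) where
  diags : Finset (Fin n × Fin n)
  ordered : ∀ e ∈ diags, e.1 < e.2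
  diag : ∀ e ∈ diags, IsDiag P e.1 e.2
  noncross : ∀ e ∈ diags, ∀ f ∈ diags, e ≠ f →
    openSegment ℝ (P.V e.1) (P.V e.2) ∩ openSegment ℝ (P.V f.1) (P.V f.2) = ∅
  maximal : ∀ i j : Fin n, IsDiag P i j → i < j → (i, j) ∉ diags →
    ∃ f ∈ diags, (openSegment ℝ (P.V i) (P.V j) ∩ openSegment ℝ (P.V f.1) (P.V f.2)).Nonempty

/-- Two triangulations of `P` differ by a single flip: one diagonal is exchanged for another. -/
def IsFlip {n : ℕ} {P : SimplePolygon n} (T T' : Triangulation P) : Prop :=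
  ∃ d e : Fin n × Fin n, d ∈ T.diags ∧ e ∉ T.diags ∧ T'.diags = insert e (T.diags.erase d)

/-- There is a sequence of `k` flips transforming `T` into `T'`. -/
def FlipSeqLen {n : ℕ} {P : SimplePolygon n} (T T' : Triangulation P) (k : ℕ) : Prop :=
  ∃ σ : Fin (k+1) → Triangulation P, σ 0 = T ∧ σ (Fin.last k) = T' ∧
    ∀ i : Fin k, IsFlip (σ i.castSucc) (σ i.succ)

/-- The flip distance between two triangulations of a simple polygon: the minimum number of
flips needed to transform one into the other (`⊤` if there is no such sequence). -/
def flipDist {n : ℕ} {P : SimplePolygon n} (T T' : Triangulation P) : ℕ∞ :=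
  sInf {l : ℕ∞ | ∃ k : ℕ, FlipSeqLen T T' k ∧ (k : ℕ∞) = l}

/-- The number of diagonals of `T` incident to the vertex `v`. -/
def degreeAt {n : ℕ} {P : SimplePolygon n} (T : Triangulation P) (v : Fin n) : ℕ :=
  (T.diags.filter (fun e => e.1 = v ∨ e.2 = v)).card

/-- The vertex `v` has maximum degree in the triangulation `T`. -/
def maxDegAt {n : ℕ} {P : SimplePolygon n} (T : Triangulation P) (v : Fin n) : Prop :=
  ∀ w : Fin n, degreeAt T w ≤ degreeAt T v

/-- `a` and `b` are joined by an edge of the triangulation `T` (a diagonal or a boundary edge). -/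
def IsEdgeOf {n : ℕ} {P : SimplePolygon n} (T : Triangulation P) (a b : Fin n) : Prop :=
  a ≠ b ∧ ((a, b) ∈ T.diags ∨ (b, a) ∈ T.diags ∨ b = nextIdx a ∨ a = nextIdx b)

/-- `a`, `b`, `c` form a triangle of the triangulation `T`. -/
def IsTriangleOf {n : ℕ} {P : SimplePolygon n} (T : Triangulation P) (a b c : Fin n) : Prop :=
  IsEdgeOf T a b ∧ IsEdgeOf T b c ∧ IsEdgeOf T a c
/-! ### Double chains -/

/-- Four points are in convex position (they form a convex quadrilateral). -/
def ConvexPos4 (a b c d : Pt) : Prop :=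
  a ∉ convexHull ℝ ({b, c, d} : Set Pt) ∧ b ∉ convexHull ℝ ({a, c, d} : Set Pt) ∧
  c ∉ convexHull ℝ ({a, b, d} : Set Pt) ∧ d ∉ convexHull ℝ ({a, b, c} : Set Pt)

/-- The cross product `(b - a) × (q - a)`, determining the position of `q`
relative to the directed line from `a` to `b`. -/
def cross2 (a b q : Pt) : ℝ := (b.1 - a.1) * (q.2 - a.2) - (b.2 - a.2) * (q.1 - a.1)

/-- The closed half-plane below (to the right of) the directed line from `a` to `b`. -/
def belowLine (a b : Pt) : Set Pt := {q | cross2 a b q ≤ 0}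

/-- The closed half-plane above (to the left of) the directed line from `a` to `b`. -/
def aboveLine (a b : Pt) : Set Pt := {q | 0 ≤ cross2 a b q}

/-- `q` lies strictly to the right of the directed line from `a` to `b`. -/
def rightOf (a b q : Pt) : Prop := cross2 a b q < 0

/-- The line through the two points `a` and `b`. -/
def lineThrough (a b : Pt) : Set Pt := {q | cross2 a b q = 0}

/-- The vertex sequence `⟨l_1, …, l_n, u_n, …, u_1⟩` of the polygon `P_D` of a double chain. -/
def dcSeq {n : ℕ} (l u : Fin n → Pt) : Fin (2*n) → Pt := fun i =>
  if h : (i : ℕ) < n then l ⟨i, h⟩ else u ⟨2*n - 1 - (i : ℕ), by omega⟩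

/-- A double chain with `n` vertices `u_1, …, u_n` on the upper chain and `l_1, …, l_n` on the
lower chain, both numbered from left to right: every point of one chain sees every point of the
other chain (within the polygon `P_D`), and any quadrilateral formed by three vertices of one
chain and one vertex of the other chain is non-convex.  `poly` is the polygon `P_D` with
vertex sequence `⟨l_1, …, l_n, u_n, …, u_1⟩`. -/
structure DoubleChain (n : ℕ) where
  hn : 2 ≤ n
  u : Fin n → Pt
  l : Fin n → Pt
  mono_u : StrictMono fun i => (u i).1
  mono_l : StrictMono fun i => (l i).1
  poly : SimplePolygon (2*n)
  hpoly : poly.V = dcSeq l u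
  visible : ∀ i j : Fin n, openSegment ℝ (u i) (l j) ⊆ polyRegion poly
  nonconvex_u : ∀ i j k : Fin n, i < j → j < k → ∀ w : Fin n,
    ¬ ConvexPos4 (u i) (u j) (u k) (l w)
  nonconvex_l : ∀ i j k : Fin n, i < j → j < k → ∀ w : Fin n,
    ¬ ConvexPos4 (l i) (l j) (l k) (u w)

/-- The flip-kernel of a double chain: the intersection of the closed half-planes below the
lines through `u_1 u_2` and `u_{n-1} u_n` and above the lines through `l_1 l_2` and
`l_{n-1} l_n`. -/
def flipKernel {n : ℕ} (D : DoubleChain n) : Set Pt :=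
  belowLine (D.u ⟨0, by have := D.hn; omega⟩) (D.u ⟨1, by have := D.hn; omega⟩) ∩
  belowLine (D.u ⟨n-2, by have := D.hn; omega⟩) (D.u ⟨n-1, by have := D.hn; omega⟩) ∩
  aboveLine (D.l ⟨0, by have := D.hn; omega⟩) (D.l ⟨1, by have := D.hn; omega⟩) ∩
  aboveLine (D.l ⟨n-2, by have := D.hn; omega⟩) (D.l ⟨n-1, by have := D.hn; omega⟩)

/-- The union of those open wedges (connected components of the complement of the union of the
two given lines) whose interior avoids the forbidden set `forb` but meets the segment from
`a` to `b`. -/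
def wedgeComponents (L : Set Pt) (a b : Pt) (forb : Set Pt) : Set Pt :=
  ⋃₀ {C : Set Pt | (∃ x ∉ L, C = connectedComponentIn Lᶜ x) ∧
      (C ∩ segment ℝ a b).Nonempty ∧ C ∩ forb = ∅}

/-- The hourglass `W = W_1 ∪ W_n` of a double chain: `W_1` is the wedge defined by the lines
through `u_1 u_2` and `l_1 l_2` whose interior contains no point of the double chain but
meets the segment `u_1 l_1`, and `W_n` is defined analogously at the other end. -/
def hourglass {n : ℕ} (D : DoubleChain n) : Set Pt :=
  wedgeComponents
    (lineThrough (D.u ⟨0, by have := D.hn; omega⟩) (D.u ⟨1, by have := D.hn; omega⟩) ∪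
     lineThrough (D.l ⟨0, by have := D.hn; omega⟩) (D.l ⟨1, by have := D.hn; omega⟩))
    (D.u ⟨0, by have := D.hn; omega⟩) (D.l ⟨0, by have := D.hn; omega⟩)
    (Set.range D.u ∪ Set.range D.l) ∪
  wedgeComponents
    (lineThrough (D.u ⟨n-1, by have := D.hn; omega⟩) (D.u ⟨n-2, by have := D.hn; omega⟩) ∪
     lineThrough (D.l ⟨n-1, by have := D.hn; omega⟩) (D.l ⟨n-2, by have := D.hn; omega⟩))
    (D.u ⟨n-1, by have := D.hn; omega⟩) (D.l ⟨n-1, by have := D.hn; omega⟩)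
    (Set.range D.u ∪ Set.range D.l)

/-- The vertex sequence `⟨l_1, …, l_n, z, u_n, …, u_1⟩` of the polygon `P_D^z` obtained from a
double chain by adding an extra vertex `z` between `l_n` and `u_n`. -/
def dcpSeq {n : ℕ} (l u : Fin n → Pt) (z : Pt) : Fin (2*n+1) → Pt := fun i =>
  if h : (i : ℕ) < n then l ⟨i, h⟩
  else if _h' : (i : ℕ) = n then z
  else u ⟨2*n - (i : ℕ), by omega⟩

/-- The embedding of the vertices of a double chain polygon (in the order
`⟨l_1, …, l_n, u_n, …, u_1⟩`) into the vertices of an ambient polygon, given the positions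
`f i` of `l_{i+1}` and `g i` of `u_{i+1}`. -/
def dcEmbed {n Np : ℕ} (f g : Fin n → Fin Np) : Fin (2*n) → Fin Np := fun i =>
  if h : (i : ℕ) < n then f ⟨i, h⟩ else g ⟨2*n - 1 - (i : ℕ), by omega⟩
/-! ### Chain paths -/

/-- The chain path of a triangulation of the polygon `P_D^+` (a double chain with `m` vertices on
each chain, plus an extra vertex `z`): the set of grid points `(v, w)` such that `u_v l_w` is a
chain edge of the triangulation.  The boundary edge `u_1 l_1` contributes the point `(1,1)`. -/
def chainPathOf {m : ℕ} {Q : SimplePolygon (2*m+1)} (T : Triangulation Q) : Finset (ℕ × ℕ) :=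
  insert (1, 1)
    ((T.diags.filter (fun e => (e.1 : ℕ) < m ∧ m + 1 ≤ (e.2 : ℕ))).image
      (fun e => (2*m + 1 - (e.2 : ℕ), (e.1 : ℕ) + 1)))

/-- `C` is the vertex set of an `x`- and `y`-monotone lattice path in the `m × m` grid starting
at `(1,1)`. -/
def IsChainPath (m : ℕ) (C : Finset (ℕ × ℕ)) : Prop :=
  ∃ (k : ℕ) (f : Fin (k+1) → ℕ × ℕ), f 0 = (1, 1) ∧
    (∀ i : Fin k, f i.succ = ((f i.castSucc).1 + 1, (f i.castSucc).2) ∨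
                  f i.succ = ((f i.castSucc).1, (f i.castSucc).2 + 1)) ∧
    (∀ i, (f i).1 ≤ m ∧ (f i).2 ≤ m) ∧
    C = Finset.image f Finset.univ

/-- `p` is the endpoint (the dominant vertex) of the monotone lattice path `C`. -/
def IsPathEnd (C : Finset (ℕ × ℕ)) (p : ℕ × ℕ) : Prop :=
  p ∈ C ∧ ∀ c ∈ C, c.1 ≤ p.1 ∧ c.2 ≤ p.2

/-- The monotone lattice path `C'` is obtained from `C` by moving the endpoint one unit north or
east. -/
def PathExtend (C C' : Finset (ℕ × ℕ)) : Prop :=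
  ∃ p q : ℕ × ℕ, IsPathEnd C p ∧ (q = (p.1 + 1, p.2) ∨ q = (p.1, p.2 + 1)) ∧ q ∉ C ∧
    C' = insert q C

/-- The monotone lattice path `C'` is obtained from `C` by changing an east-north bend into a
north-east bend (or vice versa) at the unit box with lower-left corner `c`. -/
def BendSwapAt (c : ℕ × ℕ) (C C' : Finset (ℕ × ℕ)) : Prop :=
  (c.1, c.2) ∈ C ∧ (c.1 + 1, c.2 + 1) ∈ C ∧
    (((c.1 + 1, c.2) ∈ C ∧ (c.1, c.2 + 1) ∉ C ∧
        C' = insert (c.1, c.2 + 1) (C.erase (c.1 + 1, c.2))) ∨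
     ((c.1, c.2 + 1) ∈ C ∧ (c.1 + 1, c.2) ∉ C ∧
        C' = insert (c.1 + 1, c.2) (C.erase (c.1, c.2 + 1))))

/-- The monotone lattice path `C'` is obtained from `C` by swapping a bend. -/
def BendSwap (C C' : Finset (ℕ × ℕ)) : Prop := ∃ c, BendSwapAt c C C'
/-! ### The polygon `P_D^+` for a set of sinks -/

/-- The setting of the reduction: a set `S` of `N` sinks with coordinates in `{1, …, n}²`
(sorted by their pairwise distinct `y`-coordinates), the big double chain `D` with
`m = β·n = 2·N·n` vertices on each chain whose flip-kernel contains a point `z` to the right of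
the directed line `l_m u_m`, and the polygon `Q = P_D^+ = ⟨l_1, …, l_m, z, u_m, …, u_1⟩`. -/
structure PlusSetup (n N : ℕ) where
  hn2 : 2 ≤ n
  hN : 1 ≤ N
  S : Fin N → ℕ × ℕ
  hSx : ∀ i, 1 ≤ (S i).1 ∧ (S i).1 ≤ n
  hSy1 : ∀ i, 1 ≤ (S i).2 ∧ (S i).2 < n
  hSy : StrictMono fun i => (S i).2
  hSxpf : ∀ i, 2*N*(S i).1 ≤ 2*N*n
  hSpf : ∀ i, 2*N*(S i).2 + 2*N ≤ 2*N*n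
  D : DoubleChain (2*N*n)
  z : Pt
  hz1 : z ∈ flipKernel D
  hz2 : rightOf (D.l ⟨2*N*n - 1, by have := D.hn; omega⟩)
                (D.u ⟨2*N*n - 1, by have := D.hn; omega⟩) z
  Q : SimplePolygon (2*(2*N*n)+1)
  hQ : Q.V = dcpSeq D.l D.u z

/-- The flip sequence `σ` on `P_D^+` visits the sink `S i = (x, y)`: some triangulation of the
sequence contains the chain triangle `u_{βx} l_{βy} l_{βy+1}` (where `β = 2N`). -/
def visitsSink {n N : ℕ} (PS : PlusSetup n N) {k : ℕ}
    (σ : Fin (k+1) → Triangulation PS.Q) (i : Fin N) : Prop :=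
  ∃ t : Fin (k+1),
    IsTriangleOf (σ t)
      ⟨2*N*(PS.S i).2 - 1, by have := PS.hSpf i; omega⟩
      ⟨2*N*(PS.S i).2, by have := PS.hSpf i; have := PS.hN; omega⟩
      ⟨2*(2*N*n) - 2*N*(PS.S i).1 + 1, by
        have h1 : 0 < 2*N*(PS.S i).1 :=
          Nat.mul_pos (by have := PS.hN; omega) (PS.hSx i).1
        have h2 : 0 < 2*N*n := Nat.mul_pos (by have := PS.hN; omega) (by have := PS.hn2; omega)
        omega⟩

/-- A flip traversal for the set of sinks: a flip sequence on `P_D^+` that begins and ends at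
the triangulation whose chain path has its endpoint at the root `(1,1)`, and that visits every
sink. -/
def IsFlipTraversal {n N : ℕ} (PS : PlusSetup n N) {k : ℕ}
    (σ : Fin (k+1) → Triangulation PS.Q) : Prop :=
  (∀ i : Fin k, IsFlip (σ i.castSucc) (σ i.succ)) ∧
  chainPathOf (σ 0) = {(1, 1)} ∧
  chainPathOf (σ (Fin.last k)) = {(1, 1)} ∧
  ∀ i : Fin N, visitsSink PS σ i
/-! ### The polygon `P_D^*` with sink gadgets -/

/-- The number of vertices of `P_D^*`: `2m + 1 + N(2d - 2)` with `m = 2Nn` and `d = nN`. -/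
def Mc (n N : ℕ) : ℕ := 2*N*n + (2*(n*N) - 2)*N + 1 + 2*N*n

/-- The number of sink gadgets inserted strictly before the lower-chain vertex with
(0-based) index `j`. -/
def cntBelow (N : ℕ) (S : Fin N → ℕ × ℕ) (j : ℕ) : ℕ :=
  (Finset.univ.filter (fun i : Fin N => 2*N*(S i).2 ≤ j)).card

theorem cntBelow_le (N : ℕ) (S : Fin N → ℕ × ℕ) (j : ℕ) : cntBelow N S j ≤ N :=
  le_trans (Finset.card_filter_le _ _) (by simp)

/-- The position of the lower-chain vertex `l_{j+1}` of `D` among the vertices of `P_D^*`. -/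
def posL (n N : ℕ) (S : Fin N → ℕ × ℕ) (j : Fin (2*N*n)) : Fin (Mc n N) :=
  ⟨(j : ℕ) + (2*(n*N) - 2) * cntBelow N S (j : ℕ), by
    have h1 : cntBelow N S (j : ℕ) ≤ N := cntBelow_le N S (j : ℕ)
    have h2 := Nat.mul_le_mul_left (2*(n*N) - 2) h1
    have h3 := j.isLt
    unfold Mc
    omega⟩

/-- The position of the vertex `z` among the vertices of `P_D^*`. -/
def posZ (n N : ℕ) : Fin (Mc n N) := ⟨2*N*n + (2*(n*N) - 2)*N, by unfold Mc; omega⟩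

/-- The position of the upper-chain vertex `u_{j+1}` of `D` among the vertices of `P_D^*`. -/
def posU (n N : ℕ) (j : Fin (2*N*n)) : Fin (Mc n N) :=
  ⟨Mc n N - 1 - (j : ℕ), by unfold Mc; omega⟩

/-- The position of the `(t+1)`-st interior vertex (in boundary order) of the sink gadget of the
`ii`-th sink (whose `y`-coordinate is `yi`) among the vertices of `P_D^*`. -/
def posG (n N yi ii t : ℕ) (hyi : 2*N*yi + 2*N ≤ 2*N*n) (hii : ii < N)
    (ht : t < 2*(n*N) - 2) : Fin (Mc n N) :=
  ⟨2*N*yi + (2*(n*N) - 2)*ii + t, by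
    have h3 := Nat.mul_le_mul_left (2*(n*N) - 2) (show ii + 1 ≤ N by omega)
    rw [Nat.mul_add, Nat.mul_one] at h3
    unfold Mc
    omega⟩

/-- The full construction of the polygon `P_D^*` from a set `S` of `N` sinks on the `n × n` grid
(with `β = 2N`, `d = nN`, `m = βn`), together with the source triangulation `T1` and the target
triangulation `T2`.  The sink gadget of the `i`-th sink `(x, y)` is a double chain `G i` with
`d` vertices on each chain replacing the edge `l_{βy} l_{βy+1}`; its last lower-chain vertex is
`l_{βy}`, its last upper-chain vertex is `l_{βy+1}`, and `u_{βx}` is the only vertex of `P_D^*`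
inside its hourglass and lies in its flip-kernel.  `T1` triangulates the `P_D^+` part with all
diagonals incident to `z` and every gadget with its upper extreme triangulation; `T2` is the
same except that every gadget carries its lower extreme triangulation. -/
structure StarConstruction (n N : ℕ) extends PlusSetup n N where
  P : SimplePolygon (Mc n N)
  hPL : ∀ j : Fin (2*N*n), P.V (posL n N toPlusSetup.S j) = toPlusSetup.D.l j
  hPz : P.V (posZ n N) = toPlusSetup.z
  hPU : ∀ j : Fin (2*N*n), P.V (posU n N j) = toPlusSetup.D.u j
  G : Fin N → DoubleChain (n*N)
  hGl : ∀ i : Fin N, (G i).l ⟨n*N - 1, by have := (G i).hn; omega⟩ =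
    toPlusSetup.D.l ⟨2*N*(toPlusSetup.S i).2 - 1, by have := toPlusSetup.hSpf i; have := toPlusSetup.D.hn; omega⟩
  hGu : ∀ i : Fin N, (G i).u ⟨n*N - 1, by have := (G i).hn; omega⟩ =
    toPlusSetup.D.l ⟨2*N*(toPlusSetup.S i).2, by have := toPlusSetup.hSpf i; have := hN; omega⟩
  hPGl : ∀ (i : Fin N) (t : Fin (n*N - 1)),
    P.V (posG n N (toPlusSetup.S i).2 i t (hSpf i) i.isLt
      (by have := (G i).hn; have := t.isLt; omega)) =
    (G i).l ⟨n*N - 2 - (t : ℕ), by have := (G i).hn; omega⟩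
  hPGu : ∀ (i : Fin N) (t : Fin (n*N - 1)),
    P.V (posG n N (toPlusSetup.S i).2 i ((n*N - 1) + (t : ℕ)) (hSpf i) i.isLt
      (by have := (G i).hn; have := t.isLt; omega)) =
    (G i).u ⟨(t : ℕ), by have := t.isLt; omega⟩
  hGhour : ∀ i : Fin N,
    toPlusSetup.D.u ⟨2*N*(toPlusSetup.S i).1 - 1, by have := toPlusSetup.hSxpf i; have := toPlusSetup.D.hn; omega⟩ ∈ hourglass (G i)
  hGonly : ∀ (i : Fin N) (v : Fin (Mc n N)),
    P.V v ≠ toPlusSetup.D.u ⟨2*N*(toPlusSetup.S i).1 - 1, by have := toPlusSetup.hSxpf i; have := toPlusSetup.D.hn; omega⟩ →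
    P.V v ∉ hourglass (G i)
  hGkern : ∀ i : Fin N,
    toPlusSetup.D.u ⟨2*N*(toPlusSetup.S i).1 - 1, by have := toPlusSetup.hSxpf i; have := toPlusSetup.D.hn; omega⟩ ∈ flipKernel (G i)
  T1 : Triangulation P
  hT1 : ∀ a b : Fin (Mc n N), (a, b) ∈ T1.diags ↔
    ((∃ j : Fin (2*N*n), (j : ℕ) + 2 ≤ 2*N*n ∧ a = posL n N toPlusSetup.S j ∧ b = posZ n N) ∨
     (∃ j : Fin (2*N*n), (j : ℕ) + 2 ≤ 2*N*n ∧ a = posZ n N ∧ b = posU n N j) ∨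
     (∃ i : Fin N,
       a = posL n N toPlusSetup.S ⟨2*N*(toPlusSetup.S i).2 - 1, by have := toPlusSetup.hSpf i; have := toPlusSetup.D.hn; omega⟩ ∧
       b = posL n N toPlusSetup.S ⟨2*N*(toPlusSetup.S i).2, by have := toPlusSetup.hSpf i; have := hN; omega⟩) ∨
     (∃ (i : Fin N) (t : ℕ) (ht : t + 3 ≤ n*N),
       a = posG n N (toPlusSetup.S i).2 i t (hSpf i) i.isLt (by omega) ∧
       b = posG n N (toPlusSetup.S i).2 i (n*N - 1) (hSpf i) i.isLt (by have := (G i).hn; omega)) ∨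
     (∃ (i : Fin N) (t : ℕ) (ht : n*N - 1 ≤ t ∧ t ≤ 2*(n*N) - 3),
       a = posL n N toPlusSetup.S ⟨2*N*(toPlusSetup.S i).2 - 1, by have := toPlusSetup.hSpf i; have := toPlusSetup.D.hn; omega⟩ ∧
       b = posG n N (toPlusSetup.S i).2 i t (hSpf i) i.isLt (by have := (G i).hn; omega)))
  T2 : Triangulation P
  hT2 : ∀ a b : Fin (Mc n N), (a, b) ∈ T2.diags ↔
    ((∃ j : Fin (2*N*n), (j : ℕ) + 2 ≤ 2*N*n ∧ a = posL n N toPlusSetup.S j ∧ b = posZ n N) ∨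
     (∃ j : Fin (2*N*n), (j : ℕ) + 2 ≤ 2*N*n ∧ a = posZ n N ∧ b = posU n N j) ∨
     (∃ i : Fin N,
       a = posL n N toPlusSetup.S ⟨2*N*(toPlusSetup.S i).2 - 1, by have := toPlusSetup.hSpf i; have := toPlusSetup.D.hn; omega⟩ ∧
       b = posL n N toPlusSetup.S ⟨2*N*(toPlusSetup.S i).2, by have := toPlusSetup.hSpf i; have := hN; omega⟩) ∨
     (∃ (i : Fin N) (t : ℕ) (ht : n*N ≤ t ∧ t ≤ 2*(n*N) - 3),
       a = posG n N (toPlusSetup.S i).2 i (n*N - 2) (hSpf i) i.isLt (by have := (G i).hn; omega) ∧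
       b = posG n N (toPlusSetup.S i).2 i t (hSpf i) i.isLt (by have := (G i).hn; omega)) ∨
     (∃ (i : Fin N) (t : ℕ) (ht : t ≤ n*N - 2),
       a = posG n N (toPlusSetup.S i).2 i t (hSpf i) i.isLt (by have := (G i).hn; omega) ∧
       b = posL n N toPlusSetup.S ⟨2*N*(toPlusSetup.S i).2, by have := toPlusSetup.hSpf i; have := hN; omega⟩))

/-- The points of the sink set `S` of a construction, as points of the plane. -/
def sinkPts {n N : ℕ} (C : StarConstruction n N) : Set Pt :=
  Set.range fun i => toPt (C.S i)
/-! ### Traces -/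

/-- The set of points of a unit grid edge: `e = (p, true)` is the horizontal edge from `p` to
`p + (1,0)`, and `e = (p, false)` is the vertical edge from `p` to `p + (0,1)`. -/
def gridEdgeSet (e : (ℕ × ℕ) × Bool) : Set Pt :=
  if e.2 then segment ℝ ((e.1.1 : ℝ), (e.1.2 : ℝ)) ((e.1.1 : ℝ) + 1, (e.1.2 : ℝ))
  else segment ℝ ((e.1.1 : ℝ), (e.1.2 : ℝ)) ((e.1.1 : ℝ), (e.1.2 : ℝ) + 1)

/-- The set of points of the closed unit box with lower-left corner `c`. -/
def boxSet (c : ℕ × ℕ) : Set Pt :=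
  {p | (c.1 : ℝ) ≤ p.1 ∧ p.1 ≤ (c.1 : ℝ) + 1 ∧ (c.2 : ℝ) ≤ p.2 ∧ p.2 ≤ (c.2 : ℝ) + 1}

/-- The union of the points of the given grid edges and boxes. -/
def traceCarrier (E : Finset ((ℕ × ℕ) × Bool)) (B : Finset (ℕ × ℕ)) : Set Pt :=
  (⋃ e ∈ E, gridEdgeSet e) ∪ ⋃ c ∈ B, boxSet c

/-- A trace on the `m × m` grid: a union of unit grid edges and unit boxes (with positive
integer coordinates) that is topologically connected, contains the root `(1,1)`, and in which
every grid point has a monotone path to the root inside the trace. -/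
structure Trace (m : ℕ) where
  edges : Finset ((ℕ × ℕ) × Bool)
  boxes : Finset (ℕ × ℕ)
  hedges : ∀ e ∈ edges, 1 ≤ e.1.1 ∧ 1 ≤ e.1.2 ∧
    (if e.2 then e.1.1 + 1 ≤ m ∧ e.1.2 ≤ m else e.1.1 ≤ m ∧ e.1.2 + 1 ≤ m)
  hboxes : ∀ c ∈ boxes, 1 ≤ c.1 ∧ 1 ≤ c.2 ∧ c.1 + 1 ≤ m ∧ c.2 + 1 ≤ m
  conn : IsConnected (traceCarrier edges boxes)
  root_mem : ((1 : ℝ), (1 : ℝ)) ∈ traceCarrier edges boxes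
  mono : ∀ p : ℕ × ℕ, ((p.1 : ℝ), (p.2 : ℝ)) ∈ traceCarrier edges boxes →
    MonoPathIn (traceCarrier edges boxes) ((1 : ℝ), (1 : ℝ)) ((p.1 : ℝ), (p.2 : ℝ))

namespace Trace

/-- The set of points of a trace. -/
def carrier {m : ℕ} (R : Trace m) : Set Pt := traceCarrier R.edges R.boxes

/-- The number of boundary sides of the box `c` in the collection of boxes `B`: the number of
sides of `c` that are not contained in another box of `B`. -/
def boundarySides (B : Finset (ℕ × ℕ)) (c : ℕ × ℕ) : ℕ :=
  (if (c.1 + 1, c.2) ∈ B then 0 else 1) + (if (c.1 - 1, c.2) ∈ B then 0 else 1) +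
  (if (c.1, c.2 + 1) ∈ B then 0 else 1) + (if (c.1, c.2 - 1) ∈ B then 0 else 1)

/-- The cost of a trace: each edge costs `2`, and each box costs `1` plus its number of
boundary sides. -/
def cost {m : ℕ} (R : Trace m) : ℕ :=
  2 * R.edges.card + ∑ c ∈ R.boxes, (1 + boundarySides R.boxes c)

/-- The trace `R` covers the sink set `S` (scaled by `β`): for every sink `(x, y)` the grid
point `(βx, βy)` belongs to the trace. -/
def covers {m : ℕ} (R : Trace m) {N : ℕ} (β : ℕ) (S : Fin N → ℕ × ℕ) : Prop :=
  ∀ i : Fin N, (((β * (S i).1 : ℕ) : ℝ), ((β * (S i).2 : ℕ) : ℝ)) ∈ R.carrier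

end Trace

/-- The flip from `C` to `C'` extends the chain path by the grid edge `e`. -/
def ExtendAdds (e : (ℕ × ℕ) × Bool) (C C' : Finset (ℕ × ℕ)) : Prop :=
  ∃ p q : ℕ × ℕ, IsPathEnd C p ∧ q ∉ C ∧ C' = insert q C ∧
    ((q = (p.1 + 1, p.2) ∧ e = (p, true)) ∨ (q = (p.1, p.2 + 1) ∧ e = (p, false)))

/-- The grid edge `e` coincides with a side of one of the boxes in `B`. -/
def IsBoxSide (B : Finset (ℕ × ℕ)) (e : (ℕ × ℕ) × Bool) : Prop :=
  if e.2 then e.1 ∈ B ∨ (e.1.1, e.1.2 - 1) ∈ B else e.1 ∈ B ∨ (e.1.1 - 1, e.1.2) ∈ B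

/-- `R` is the trace of the flip sequence `σ` on `P_D^+`: its boxes are those added by the
bend-changing flips of `σ`, and its edges are those added by the path-extending flips of `σ`,
except those coinciding with a side of a box of the trace. -/
def IsTraceOf {m : ℕ} {Q : SimplePolygon (2*m+1)} (R : Trace m) {k : ℕ}
    (σ : Fin (k+1) → Triangulation Q) : Prop :=
  (∀ c : ℕ × ℕ, c ∈ R.boxes ↔
    ∃ i : Fin k, BendSwapAt c (chainPathOf (σ i.castSucc)) (chainPathOf (σ i.succ))) ∧
  (∀ e : (ℕ × ℕ) × Bool, e ∈ R.edges ↔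
    ((∃ i : Fin k, ExtendAdds e (chainPathOf (σ i.castSucc)) (chainPathOf (σ i.succ))) ∧
      ¬ IsBoxSide R.boxes e))

/-- `A` is a shortest-path tree in the region `W` from `root` to the given sink points: a
rectilinear tree inside `W` that contains the root and all sinks, whose leaves lie at sinks,
and in which every sink is joined to the root by a monotone (hence shortest possible) path. -/
def IsShortestPathTreeIn (A : RectTree) (W : Set Pt) (root : Pt) (sinks : Set Pt) : Prop :=
  A.carrier ⊆ W ∧ root ∈ A.carrier ∧ (∀ s ∈ sinks, s ∈ A.carrier) ∧
  (∀ v : Pt, A.IsLeaf v → v ≠ root → v ∈ sinks) ∧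
  ∀ s ∈ sinks, MonoPathIn A.carrier root s

/-!
Translation by `(-1,-1)` preserves segments, leaves and monotone paths, so the shortest-path
tree becomes an arborescence rooted at the origin. For the length bound, the length of a
rectilinear tree is the one-dimensional Hausdorff measure of its carrier; as the tree lies in
the trace, this is at most the measure of the union of the unit edges, i.e. at most the number
of edges, which is half the cost of a boxless trace.
-/

open MeasureTheory

namespace Seg

theorem ext {s t : Seg} (hp : s.p = t.p) (hq : s.q = t.q) : s = t := by
  cases s; cases t; cases hp; cases hq; rfl

theorem translate_injective (w : Pt) : Function.Injective (translate w) := fun _ _ h =>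
  ext (add_right_cancel (congrArg p h)) (add_right_cancel (congrArg q h))

theorem mem_set_translate (w : Pt) (s : Seg) (x : Pt) :
    x ∈ (s.translate w).set ↔ x - w ∈ s.set := by
  have h := mem_segment_translate ℝ w (x := x - w) (b := s.p) (c := s.q)
  rwa [add_sub_cancel, add_comm w, add_comm w] at h

theorem set_translate (w : Pt) (s : Seg) : (s.translate w).set = (· + w) '' s.set := by
  ext x
  rw [mem_set_translate, Set.image_add_right, Set.mem_preimage, sub_eq_add_neg]

theorem mem_endpoints_translate (w : Pt) (s : Seg) (x : Pt) :
    x ∈ (s.translate w).endpoints ↔ x - w ∈ s.endpoints := by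
  simp only [endpoints, translate, Set.mem_insert_iff, Set.mem_singleton_iff, ← sub_eq_iff_eq_add]

theorem length_translate (w : Pt) (s : Seg) : (s.translate w).length = s.length := by
  simp only [length, translate, Prod.fst_add, Prod.snd_add, add_sub_add_right_eq_sub]

theorem length_nonneg (s : Seg) : 0 ≤ s.length :=
  add_nonneg (abs_nonneg _) (abs_nonneg _)

theorem isClosed_set (s : Seg) : IsClosed s.set := by
  rw [set, segment_eq_image]
  exact (isCompact_Icc.image (by fun_prop)).isClosed

/-- On an axis-parallel segment the sup metric of `ℝ × ℝ` agrees with the `ℓ¹` length. -/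
theorem hausdorffMeasure_set (s : Seg) : μH[1] s.set = ENNReal.ofReal s.length := by
  rw [set, hausdorffMeasure_segment, edist_dist, Prod.dist_eq, Real.dist_eq, Real.dist_eq, length,
    abs_sub_comm s.p.1, abs_sub_comm s.p.2]
  rcases s.axis with h | h <;> simp [h]

theorem biUnion_image_translate (w : Pt) (F : Finset Seg) :
    (⋃ s ∈ F.image (translate w), s.set) = (· + w) '' ⋃ s ∈ F, s.set := by
  simp only [Finset.set_biUnion_finset_image, set_translate, Set.image_iUnion₂]

end Seg

theorem MonoPathIn.translate {W : Set Pt} {a b : Pt} (h : MonoPathIn W a b) (w : Pt) :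
    MonoPathIn ((· + w) '' W) (a + w) (b + w) := by
  obtain ⟨f, hf, hf0, hf1, hfW, hmono₁, hmono₂⟩ := h
  refine ⟨fun t => f t + w, hf.add continuousOn_const, by simp [hf0], by simp [hf1],
    fun t ht => ⟨f t, hfW t ht, rfl⟩, ?_, ?_⟩
  · exact fun t ht u hu htu => add_le_add_left (hmono₁ ht hu htu) w.1
  · exact fun t ht u hu htu => add_le_add_left (hmono₂ ht hu htu) w.2

theorem SimplyConnectedSpace.of_homeomorph {X Y : Type*} [TopologicalSpace X]
    [TopologicalSpace Y] [SimplyConnectedSpace X] (e : X ≃ₜ Y) : SimplyConnectedSpace Y :=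
  e.symm.toHomotopyEquiv.simplyConnectedSpace

namespace RectTree

def translate (w : Pt) (T : RectTree) : RectTree where
  segs := T.segs.image (Seg.translate w)
  inter := by
    simp only [Finset.mem_image]
    rintro _ ⟨s, hs, rfl⟩ _ ⟨t, ht, rfl⟩ hne x ⟨hxs, hxt⟩
    simp only [Seg.mem_set_translate] at hxs hxt
    obtain ⟨hs', ht'⟩ := T.inter s hs t ht (fun h => hne (h ▸ rfl)) ⟨hxs, hxt⟩
    exact ⟨(Seg.mem_endpoints_translate w s x).mpr hs',
      (Seg.mem_endpoints_translate w t x).mpr ht'⟩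
  conn := by
    rw [Seg.biUnion_image_translate]
    exact T.conn.image _ (continuous_add_const w).continuousOn
  acyclic := by
    have := T.acyclic
    rw [Seg.biUnion_image_translate]
    exact .of_homeomorph ((Homeomorph.addRight w).image _)

theorem carrier_translate (w : Pt) (T : RectTree) :
    (T.translate w).carrier = (· + w) '' T.carrier :=
  Seg.biUnion_image_translate w T.segs

theorem length_translate (w : Pt) (T : RectTree) : (T.translate w).length = T.length := by
  rw [length, length, translate, Finset.sum_image fun s _ t _ h => Seg.translate_injective w h]
  simp only [Seg.length_translate]

theorem IsLeaf.of_translate {w x : Pt} {T : RectTree} (h : (T.translate w).IsLeaf x) :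
    T.IsLeaf (x - w) := by
  obtain ⟨⟨_, ⟨hs', hxs⟩, huniq⟩, hall⟩ := h
  obtain ⟨s, hs, rfl⟩ := Finset.mem_image.mp hs'
  refine ⟨⟨s, ⟨hs, (Seg.mem_endpoints_translate w s x).mp hxs⟩,
    fun t ⟨ht, hxt⟩ => ?_⟩, fun t ht hxt => ?_⟩
  · exact Seg.translate_injective w <| huniq _
      ⟨Finset.mem_image_of_mem _ ht, (Seg.mem_endpoints_translate w t x).mpr hxt⟩
  · exact (Seg.mem_endpoints_translate w t x).mp <|
      hall _ (Finset.mem_image_of_mem _ ht) ((Seg.mem_set_translate w t x).mpr hxt)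

/-- Distinct segments meet in at most two points, a null set, so the measure is additive. -/
theorem hausdorffMeasure_carrier (T : RectTree) :
    μH[1] T.carrier = ENNReal.ofReal T.length := by
  have := Measure.nullSingletonClass_hausdorff Pt one_pos
  rw [carrier, length, ENNReal.ofReal_sum_of_nonneg fun s _ => s.length_nonneg,
    measure_biUnion_finset₀ _ fun s _ => s.isClosed_set.measurableSet.nullMeasurableSet]
  · exact Finset.sum_congr rfl fun s _ => s.hausdorffMeasure_set
  · intro s hs t ht hst
    exact measure_mono_null ((T.inter s hs t ht hst).trans Set.inter_subset_left)
      ((Set.toFinite ({s.p, s.q} : Set Pt)).measure_zero _)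

end RectTree

theorem hausdorffMeasure_gridEdgeSet (e : (ℕ × ℕ) × Bool) : μH[1] (gridEdgeSet e) = 1 := by
  rcases e with ⟨⟨a, b⟩, _ | _⟩ <;>
    simp [gridEdgeSet, edist_dist, Prod.dist_eq]

namespace Trace

variable {m : ℕ} (R : Trace m)

theorem cost_of_boxes_eq_empty (hbox : R.boxes = ∅) : R.cost = 2 * R.edges.card := by
  simp [cost, hbox]

theorem hausdorffMeasure_carrier_le_of_boxes_eq_empty (hbox : R.boxes = ∅) :
    μH[1] R.carrier ≤ R.edges.card := by
  calc μH[1] R.carrier = μH[1] (⋃ e ∈ R.edges, gridEdgeSet e) := by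
        simp [carrier, traceCarrier, hbox]
    _ ≤ ∑ e ∈ R.edges, μH[1] (gridEdgeSet e) := measure_biUnion_finset_le _ _
    _ = R.edges.card := by simp [hausdorffMeasure_gridEdgeSet]

theorem two_mul_length_le_cost_of_boxes_eq_empty (hbox : R.boxes = ∅) {T : RectTree}
    (hT : T.carrier ⊆ R.carrier) : 2 * T.length ≤ R.cost := by
  have hle : ENNReal.ofReal T.length ≤ R.edges.card :=
    T.hausdorffMeasure_carrier ▸ (measure_mono hT).trans
      (R.hausdorffMeasure_carrier_le_of_boxes_eq_empty hbox)
  rw [← ENNReal.ofReal_natCast, ENNReal.ofReal_le_ofReal_iff (Nat.cast_nonneg _)] at hle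
  rw [R.cost_of_boxes_eq_empty hbox]
  push_cast
  linarith

end Trace

theorem IsShortestPathTreeIn.isRSA_translate {A : RectTree} {W : Set Pt} {root : Pt}
    {sinks : Set Pt} (hA : IsShortestPathTreeIn A W root sinks) (w : Pt) :
    IsRSA (A.translate w) (root + w) ((· + w) '' sinks) := by
  obtain ⟨-, hroot, -, hleaves, hpaths⟩ := hA
  rw [IsRSA, RectTree.carrier_translate]
  refine ⟨⟨root, hroot, rfl⟩, fun v hv hvroot => ?_, ?_⟩
  · refine ⟨v - w, hleaves _ hv.of_translate fun h => hvroot ?_, sub_add_cancel v w⟩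
    rw [← h, sub_add_cancel]
  · rintro _ ⟨s, hs, rfl⟩
    exact (hpaths s hs).translate w

theorem natCast_pred_pair_eq_add {a b : ℕ} (ha : 1 ≤ a) (hb : 1 ≤ b) :
    (((a - 1 : ℕ) : ℝ), ((b - 1 : ℕ) : ℝ)) =
      ((a : ℝ), (b : ℝ)) + ((-1 : ℝ), (-1 : ℝ)) := by
  simp [Nat.cast_sub ha, Nat.cast_sub hb, sub_eq_add_neg]

theorem boxless_trace_gives_RSA_general (n N : ℕ) (S : Fin N → ℕ × ℕ)
    (hS : ∀ i, 1 ≤ (S i).1 ∧ (S i).1 ≤ n ∧ 1 ≤ (S i).2 ∧ (S i).2 ≤ n)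
    (R : Trace (2*N*n)) (hbox : R.boxes = ∅)
    (A : RectTree)
    (hA : IsShortestPathTreeIn A R.carrier ((1 : ℝ), (1 : ℝ))
      (Set.range fun i => (((2*N*(S i).1 : ℕ) : ℝ), ((2*N*(S i).2 : ℕ) : ℝ)))) :
    (∃ A' : RectTree, A'.segs = A.segs.image (Seg.translate ((-1 : ℝ), (-1 : ℝ))) ∧
      IsRSA A' ((0 : ℝ), (0 : ℝ))
        (Set.range fun i => (((2*N*(S i).1 - 1 : ℕ) : ℝ), ((2*N*(S i).2 - 1 : ℕ) : ℝ)))) ∧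
    ∃ B : RectTree,
      IsRSA B ((0 : ℝ), (0 : ℝ))
        (Set.range fun i => (((2*N*(S i).1 - 1 : ℕ) : ℝ), ((2*N*(S i).2 - 1 : ℕ) : ℝ))) ∧
      2 * B.length ≤ (R.cost : ℝ) := by
  have hsinks :
      (Set.range fun i => (((2*N*(S i).1 - 1 : ℕ) : ℝ), ((2*N*(S i).2 - 1 : ℕ) : ℝ))) =
        (· + ((-1 : ℝ), (-1 : ℝ))) ''
          Set.range fun i => (((2*N*(S i).1 : ℕ) : ℝ), ((2*N*(S i).2 : ℕ) : ℝ)) := by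
    rw [← Set.range_comp]
    exact congrArg Set.range <| funext fun i =>
      natCast_pred_pair_eq_add (Nat.mul_pos (Nat.mul_pos two_pos i.pos) (hS i).1)
        (Nat.mul_pos (Nat.mul_pos two_pos i.pos) (hS i).2.2.1)
  have hRSA := hA.isRSA_translate ((-1 : ℝ), (-1 : ℝ))
  have hroot : ((1 : ℝ), (1 : ℝ)) + ((-1 : ℝ), (-1 : ℝ)) = ((0 : ℝ), (0 : ℝ)) := by
    norm_num
  rw [← hsinks, hroot] at hRSA
  refine ⟨⟨_, rfl, hRSA⟩, _, hRSA, ?_⟩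
  rw [RectTree.length_translate]
  exact R.two_mul_length_le_cost_of_boxes_eq_empty hbox hA.1

/-- Let `R` be a covering trace for `S` that contains no boxes, and let `A`
be a shortest-path tree in `R` from the root `(1,1)` to all the points `(βx, βy)` with
`(x,y) ∈ S` (where `β = 2N`).  Then `A`, translated by `(-1,-1)`, is a rectilinear Steiner
arborescence for the set `{(βx - 1, βy - 1) : (x,y) ∈ S}`; in particular, this set has a
rectilinear Steiner arborescence of length at most `cost(R)/2`. -/
theorem boxless_trace_gives_RSA (n N : ℕ) (hN : 1 ≤ N) (S : Fin N → ℕ × ℕ)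
    (hS : ∀ i, 1 ≤ (S i).1 ∧ (S i).1 ≤ n ∧ 1 ≤ (S i).2 ∧ (S i).2 ≤ n)
    (R : Trace (2*N*n)) (hcov : R.covers (2*N) S) (hbox : R.boxes = ∅)
    (A : RectTree)
    (hA : IsShortestPathTreeIn A R.carrier ((1 : ℝ), (1 : ℝ))
      (Set.range fun i => (((2*N*(S i).1 : ℕ) : ℝ), ((2*N*(S i).2 : ℕ) : ℝ)))) :
    (∃ A' : RectTree, A'.segs = A.segs.image (Seg.translate ((-1 : ℝ), (-1 : ℝ))) ∧
      IsRSA A' ((0 : ℝ), (0 : ℝ))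
        (Set.range fun i => (((2*N*(S i).1 - 1 : ℕ) : ℝ), ((2*N*(S i).2 - 1 : ℕ) : ℝ)))) ∧
    ∃ B : RectTree,
      IsRSA B ((0 : ℝ), (0 : ℝ))
        (Set.range fun i => (((2*N*(S i).1 - 1 : ℕ) : ℝ), ((2*N*(S i).2 - 1 : ℕ) : ℝ))) ∧
      2 * B.length ≤ (R.cost : ℝ) :=
  boxless_trace_gives_RSA_general n N S hS R hbox A hA
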